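/- Pappus parallel-directions collinearity: let A₃, A₃′, A₅ be three collinear points and let l₃, l₃′, l₅ be three lines through a common point A₄. Let E₄ be the intersection of the line through A₃ parallel to l₅ with the line through A₅ parallel to l₃; let Ē₄ be the intersection of the line through A₃′ parallel to l₃ with the line through A₃ parallel to l₃′; let E₄′ be the intersection of the line through A₃′ parallel to l₅ with the line through A₅ parallel to l₃′. Then E₄, Ē₄, E₄′ are collinear. -/

import Mathlib

/-!
Write `A₃′ = A₃ + α u` and `A₅ = A₃ + β u`. Each intersection point is a base point plus a
multiple of one direction, and that multiple is read off by taking the cross product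
`[x, y] = x₁ y₂ - x₂ y₁` of the defining equation with the other direction; for instance
`E₄ = A₅ + t v₃` with `t [v₃, v₅] = [A₃ - A₅, v₅]`. The non-parallelism hypotheses make the
three denominators nonzero, and after substituting, the cross product `[Ē₄ - E₄, E₄′ - E₄]`
vanishes identically.
-/

namespace PappusParallel

variable {k : Type*} [Field k]

def cross (v w : k × k) : k := v.1 * w.2 - v.2 * w.1

lemma cross_self (v : k × k) : cross v v = 0 := by
  simp only [cross]; ring

lemma cross_anticomm (v w : k × k) : -cross v w = cross w v := by
  simp only [cross]; ring

lemma cross_smul_left (t : k) (v w : k × k) : cross (t • v) w = t * cross v w := by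
  simp only [cross, Prod.smul_fst, Prod.smul_snd, smul_eq_mul]; ring

lemma cross_eq_zero_iff {v w : k × k} (hw : w ≠ 0) : cross v w = 0 ↔ ∃ t : k, v = t • w := by
  constructor
  · intro h
    simp only [cross] at h
    rcases eq_or_ne w.1 0 with h1 | h1
    · have h2 : w.2 ≠ 0 := fun h2 => hw (Prod.ext h1 h2)
      refine ⟨v.2 / w.2, Prod.ext ?_ ?_⟩
      · simp only [h1, mul_zero, sub_zero, mul_eq_zero, h2, or_false] at h
        simp [h1, h]
      · simp [h2]
    · refine ⟨v.1 / w.1, Prod.ext ?_ ?_⟩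
      · simp [h1]
      · simp only [Prod.smul_snd, smul_eq_mul]
        field_simp
        linear_combination -h
  · rintro ⟨t, rfl⟩
    rw [cross_smul_left, cross_self, mul_zero]

lemma cross_ne_zero {v w : k × k} (hw : w ≠ 0) (h : ∀ t : k, v ≠ t • w) : cross v w ≠ 0 :=
  fun h0 => let ⟨t, ht⟩ := (cross_eq_zero_iff hw).1 h0; h t ht

lemma eq_cross_div_cross_of_add_smul_eq {A B v w : k × k} {s t : k} (hvw : cross v w ≠ 0)
    (h : A + s • v = B + t • w) : s = cross (B - A) w / cross v w := by
  rw [eq_div_iff hvw, ← sub_eq_of_eq_add h]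
  simp only [cross, Prod.fst_sub, Prod.snd_sub, Prod.fst_add, Prod.snd_add, Prod.smul_fst,
    Prod.smul_snd, smul_eq_mul]
  ring

lemma collinear_of_cross_sub_eq_zero {P Q R : k × k} (h : cross (Q - P) (R - P) = 0) :
    Collinear k ({P, Q, R} : Set (k × k)) := by
  rcases eq_or_ne (Q - P) 0 with hQ | hQ
  · rw [sub_eq_zero.1 hQ, Set.insert_idem]
    exact collinear_pair k P R
  obtain ⟨t, ht⟩ := (cross_eq_zero_iff hQ).1 (by rw [← cross_anticomm, h, neg_zero])
  rw [collinear_iff_of_mem (Set.mem_insert P _)]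
  refine ⟨Q - P, ?_⟩
  simp only [Set.mem_insert_iff, Set.mem_singleton_iff, forall_eq_or_imp, forall_eq, vadd_eq_add]
  exact ⟨⟨0, by simp⟩, ⟨1, by simp⟩, ⟨t, by rw [← ht]; abel⟩⟩

end PappusParallel

open PappusParallel in
theorem stmt16_general {k : Type*} [Field k] (A3 A3' A5 E4 E4bar E4' : k × k)
    (v3 v3' v5 : k × k)
    (hcol : Collinear k ({A3, A3', A5} : Set (k × k)))
    (hv35 : ∀ t : k, v3 ≠ t • v5) (hv3'3 : ∀ t : k, v3' ≠ t • v3)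
    (hv53' : ∀ t : k, v5 ≠ t • v3')
    (hE4a : ∃ s : k, E4 = A3 + s • v5) (hE4b : ∃ t : k, E4 = A5 + t • v3)
    (hEbara : ∃ s : k, E4bar = A3' + s • v3) (hEbarb : ∃ t : k, E4bar = A3 + t • v3')
    (hE4'a : ∃ s : k, E4' = A3' + s • v5) (hE4'b : ∃ t : k, E4' = A5 + t • v3') :
    Collinear k ({E4, E4bar, E4'} : Set (k × k)) := by
  have h35 := cross_ne_zero (by simpa using hv53' 0) hv35
  have h3'3 := cross_ne_zero (by simpa using hv35 0) hv3'3
  have h53' := cross_ne_zero (by simpa using hv3'3 0) hv53'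
  obtain ⟨u, hu⟩ := (collinear_iff_of_mem (Set.mem_insert A3 _)).1 hcol
  obtain ⟨α, rfl⟩ := hu A3' (by simp)
  obtain ⟨β, rfl⟩ := hu A5 (by simp)
  obtain ⟨t1, rfl⟩ := hE4b
  obtain ⟨t2, rfl⟩ := hEbarb
  obtain ⟨s3, rfl⟩ := hE4'a
  obtain ⟨s1, h1⟩ := hE4a
  obtain ⟨s2, h2⟩ := hEbara
  obtain ⟨t3, h3⟩ := hE4'b
  obtain rfl := eq_cross_div_cross_of_add_smul_eq h35 h1
  obtain rfl := eq_cross_div_cross_of_add_smul_eq h3'3 h2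
  obtain rfl := eq_cross_div_cross_of_add_smul_eq h53' h3
  apply collinear_of_cross_sub_eq_zero
  -- Kept opaque, the three denominators are cleared by `field_simp`.
  set D1 := cross v3 v5
  set D2 := cross v3' v3
  set D3 := cross v5 v3'
  simp only [cross, vadd_eq_add, Prod.fst_sub, Prod.snd_sub, Prod.fst_add, Prod.snd_add,
    Prod.smul_fst, Prod.smul_snd, smul_eq_mul]
  field_simp
  simp only [D1, D2, D3, cross]
  ring

/-- Pappus parallel-directions collinearity: for collinear points `A₃, A₃′, A₅` and three
pairwise non-parallel directions `v₃, v₃′, v₅` (of three lines through a common point),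
the points `E₄ = (A₃ + ⟨v₅⟩) ∩ (A₅ + ⟨v₃⟩)`, `Ē₄ = (A₃′ + ⟨v₃⟩) ∩ (A₃ + ⟨v₃′⟩)` and
`E₄′ = (A₃′ + ⟨v₅⟩) ∩ (A₅ + ⟨v₃′⟩)` are collinear. -/
theorem stmt16 {k : Type*} [Field k] (A3 A3' A5 A4 E4 E4bar E4' : k × k)
    (v3 v3' v5 : k × k)
    (hcol : Collinear k ({A3, A3', A5} : Set (k × k)))
    (hv35 : ∀ t : k, v3 ≠ t • v5) (hv3'3 : ∀ t : k, v3' ≠ t • v3)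
    (hv53' : ∀ t : k, v5 ≠ t • v3')
    (hE4a : ∃ s : k, E4 = A3 + s • v5) (hE4b : ∃ t : k, E4 = A5 + t • v3)
    (hEbara : ∃ s : k, E4bar = A3' + s • v3) (hEbarb : ∃ t : k, E4bar = A3 + t • v3')
    (hE4'a : ∃ s : k, E4' = A3' + s • v5) (hE4'b : ∃ t : k, E4' = A5 + t • v3') :
    Collinear k ({E4, E4bar, E4'} : Set (k × k)) :=
  stmt16_general A3 A3' A5 E4 E4bar E4' v3 v3' v5 hcol hv35 hv3'3 hv53' hE4a hE4b hEbara hEbarb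
    hE4'a hE4'b
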